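/- arXiv:2401.11180 — 12 statements merged into one kernel-verified Lean document; each statement's English description precedes it below -/
import Mathlib

section
/- Let G be a finite group, α an involutory automorphism, S = {s₁,…,s_r} a generalized Cayley subset induced by α, and X ⊆ G. Then X is a perfect code of GC(G, S, α) if and only if {X, α(X)s₁, …, α(X)s_r} is a partition of G. -/
open Pointwise

variable {G : Type*}

def omegaSet [Group G] (α : G ≃* G) : Set G := {x | ∃ g : G, α (g⁻¹) * g = x}

def IsGenCayleySubset [Group G] (α : G ≃* G) (S : Set G) : Prop :=
  S ∩ omegaSet α = ∅ ∧ (⇑α) '' S = S⁻¹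

/-- Adjacency in the generalized Cayley graph GC(G, S, α): g ~ h iff α(g⁻¹)h ∈ S. -/
def GCAdj [Group G] (α : G ≃* G) (S : Set G) (g h : G) : Prop := α (g⁻¹) * h ∈ S

/-- X is a perfect code: an independent set such that every vertex outside X
has exactly one neighbor in X. -/
def IsPerfectCode [Group G] (α : G ≃* G) (S : Set G) (X : Set G) : Prop :=
  (∀ x ∈ X, ∀ y ∈ X, ¬ GCAdj α S x y) ∧
  ∀ g ∉ X, ∃! x, x ∈ X ∧ GCAdj α S g x

/-- X is a total perfect code: every vertex has exactly one neighbor in X. -/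
def IsTotalPerfectCode [Group G] (α : G ≃* G) (S : Set G) (X : Set G) : Prop :=
  ∀ g : G, ∃! x, x ∈ X ∧ GCAdj α S g x

theorem stmt3 [Group G] [Fintype G] (α : G ≃* G) (hα : ∀ g : G, α (α g) = g)
    (S : Set G) (hS : IsGenCayleySubset α S) (X : Set G) :
    IsPerfectCode α S X ↔
      (X ∪ ⋃ s ∈ S, ((⇑α) '' X) * {s}) = Set.univ ∧
      (∀ s ∈ S, Disjoint X (((⇑α) '' X) * {s})) ∧
      (∀ s ∈ S, ∀ t ∈ S, s ≠ t →
        Disjoint (((⇑α) '' X) * {s}) (((⇑α) '' X) * {t})) := by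

  have hsymm : ∀ g h : G, GCAdj α S g h → GCAdj α S h g := by
    intro g h hgh
    have h1 : α (α (g⁻¹) * h) ∈ S⁻¹ := by
      rw [← hS.2]; exact Set.mem_image_of_mem _ hgh
    have h2 : α (α (g⁻¹) * h) = (α (h⁻¹) * g)⁻¹ := by
      rw [map_mul, hα, map_inv]; group
    rw [h2] at h1
    show α (h⁻¹) * g ∈ S
    rw [map_inv]
    simpa using h1
  have hmem : ∀ (g s : G), g ∈ ((⇑α) '' X) * {s} ↔ ∃ x ∈ X, α x * s = g := by
    intro g s
    simp [Set.mem_mul, eq_mul_inv_iff_mul_eq]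
  constructor
  · rintro ⟨hind, huniq⟩
    refine ⟨?_, ?_, ?_⟩
    · ext g
      simp only [Set.mem_univ, iff_true, Set.mem_union, Set.mem_iUnion]
      by_cases hg : g ∈ X
      · exact Or.inl hg
      · obtain ⟨x, ⟨hx, hadj⟩, -⟩ := huniq g hg
        refine Or.inr ⟨α (x⁻¹) * g, hsymm g x hadj, ?_⟩
        rw [hmem]
        exact ⟨x, hx, by rw [map_inv]; group⟩
    · intro s hs
      rw [Set.disjoint_left]
      intro g hgX hgM
      obtain ⟨x, hx, hxg⟩ := (hmem g s).1 hgM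
      have hadj : GCAdj α S x g := by
        show α (x⁻¹) * g ∈ S
        rw [← hxg, map_inv]
        simpa using hs
      exact hind x hx g hgX hadj
    · intro s hs t ht hst
      rw [Set.disjoint_left]
      intro g hgs hgt
      obtain ⟨x, hx, hxg⟩ := (hmem g s).1 hgs
      obtain ⟨y, hy, hyg⟩ := (hmem g t).1 hgt
      have hxy : x ≠ y := by
        intro h
        apply hst
        rw [h, ← hyg] at hxg
        exact mul_left_cancel hxg
      have hadjx : GCAdj α S x g := by
        show α (x⁻¹) * g ∈ S
        rw [← hxg, map_inv]; simpa using hs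
      have hadjy : GCAdj α S y g := by
        show α (y⁻¹) * g ∈ S
        rw [← hyg, map_inv]; simpa using ht
      by_cases hg : g ∈ X
      · exact hind x hx g hg hadjx
      · obtain ⟨z, -, hz⟩ := huniq g hg
        have h1 := hz x ⟨hx, hsymm x g hadjx⟩
        have h2 := hz y ⟨hy, hsymm y g hadjy⟩
        exact hxy (h1.trans h2.symm)
  · rintro ⟨hcov, hdisj1, hdisj2⟩
    constructor
    · intro x hx y hy hadj
      have hs : α (x⁻¹) * y ∈ S := hadj
      have hmy : y ∈ ((⇑α) '' X) * {α (x⁻¹) * y} := by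
        rw [hmem]; exact ⟨x, hx, by rw [map_inv]; group⟩
      exact Set.disjoint_left.1 (hdisj1 _ hs) hy hmy
    · intro g hg
      have hgu : g ∈ X ∪ ⋃ s ∈ S, ((⇑α) '' X) * {s} := hcov ▸ Set.mem_univ g
      rcases hgu with h | h
      · exact absurd h hg
      · simp only [Set.mem_iUnion] at h
        obtain ⟨s, hs, hgs⟩ := h
        obtain ⟨x, hx, hxg⟩ := (hmem g s).1 hgs
        have hadjx : GCAdj α S x g := by
          show α (x⁻¹) * g ∈ S
          rw [← hxg, map_inv]; simpa using hs
        refine ⟨x, ⟨hx, hsymm x g hadjx⟩, ?_⟩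
        rintro y ⟨hy, hady⟩
        have hadjy : GCAdj α S y g := hsymm g y hady
        have ht : α (y⁻¹) * g ∈ S := hadjy
        have hgt : g ∈ ((⇑α) '' X) * {α (y⁻¹) * g} := by
          rw [hmem]; exact ⟨y, hy, by rw [map_inv]; group⟩
        by_contra hne
        have hst : α (y⁻¹) * g ≠ s := by
          intro h
          apply hne
          have h3 : α y * s = g := by rw [← h, map_inv]; group
          have h4 := mul_right_cancel (h3.trans hxg.symm)
          exact α.injective h4
        exact Set.disjoint_left.1 (hdisj2 _ ht _ hs hst) hgt hgs
end

section
/- Let G be a finite group, α an involutory automorphism, S a generalized Cayley subset induced by α, and H a subgroup of G. If H is a perfect code of GC(G, S, α), then S ∩ α(H) = ∅ and α(H) = H. -/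
open Pointwise

variable {G : Type*}

theorem stmt5 [Group G] [Fintype G] (α : G ≃* G) (hα : ∀ g : G, α (α g) = g)
    (S : Set G) (hS : IsGenCayleySubset α S) (H : Subgroup G)
    (hpc : IsPerfectCode α S (H : Set G)) :
    S ∩ ((⇑α) '' (H : Set G)) = ∅ ∧ (⇑α) '' (H : Set G) = (H : Set G) := by
  have hHS : ∀ y : G, y ∈ H → y ∉ S := by
    intro y hy hyS
    exact hpc.1 1 H.one_mem y hy (by simpa [GCAdj] using hyS)
  have hαH : ∀ h : G, h ∈ H → α h ∈ H := by
    intro h hh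
    by_contra hg
    obtain ⟨x, ⟨hxH, hxS⟩, -⟩ := hpc.2 (α h) hg
    have h1 : α ((α h)⁻¹) * x ∈ S := hxS
    have h2 : α ((α h)⁻¹) = h⁻¹ := by rw [map_inv, hα]
    rw [h2] at h1
    exact hHS _ (H.mul_mem (H.inv_mem hh) hxH) h1
  constructor
  · ext s
    simp only [Set.mem_inter_iff, Set.mem_image, Set.mem_empty_iff_false, iff_false, not_and]
    rintro hsS ⟨h, hh, rfl⟩
    have h3 : α (α h) ∈ S⁻¹ := hS.2 ▸ ⟨α h, hsS, rfl⟩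
    rw [hα] at h3
    exact hHS h⁻¹ (H.inv_mem hh) (Set.mem_inv.mp h3)
  · ext x
    constructor
    · rintro ⟨h, hh, rfl⟩; exact hαH h hh
    · intro hx; exact ⟨α x, hαH x hx, hα x⟩
end

section
/- Let G be a finite group, α an involutory automorphism, S a generalized Cayley subset induced by α, and H ≤ G. Then H is a perfect code of GC(G, S, α) if and only if α(H) = H and {e} ∪ S is a set of right coset representatives of H in G. -/
open Pointwise

variable {G : Type*}

theorem stmt6 [Group G] [Fintype G] (α : G ≃* G) (hα : ∀ g : G, α (α g) = g)
    (S : Set G) (hS : IsGenCayleySubset α S) (H : Subgroup G) :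
    IsPerfectCode α S (H : Set G) ↔
      (⇑α) '' (H : Set G) = (H : Set G) ∧
      ∀ g : G, ∃! t, t ∈ insert (1 : G) S ∧ g * t⁻¹ ∈ H := by
  obtain ⟨hdisj, himg⟩ := hS
  have hone : (1 : G) ∉ S := by
    intro h
    have : (1 : G) ∈ S ∩ omegaSet α := ⟨h, ⟨1, by simp⟩⟩
    simp [hdisj] at this
  have hSinv : ∀ s ∈ S, (α s)⁻¹ ∈ S := by
    intro s hs
    have : α s ∈ S⁻¹ := himg ▸ Set.mem_image_of_mem _ hs
    exact this
  -- key computation: α (α (g⁻¹) * x) = g⁻¹ * α x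
  have hcomp : ∀ g x : G, α (α (g⁻¹) * x) = g⁻¹ * α x := by
    intro g x
    rw [map_mul, hα]
  constructor
  · rintro ⟨hind, hcode⟩
    have hHS : ∀ h ∈ H, h ∉ S := by
      intro h hh hs
      exact hind 1 (one_mem H) h hh (by simpa [GCAdj] using hs)
    have hαH : ∀ h ∈ H, α h ∈ H := by
      intro h hh
      by_contra hnot
      obtain ⟨x, ⟨hxH, hxadj⟩, -⟩ := hcode (α h) hnot
      have : h⁻¹ * x ∈ S := by
        have : α ((α h)⁻¹) * x ∈ S := hxadj
        rwa [map_inv, hα] at this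
      exact hHS _ (mul_mem (inv_mem hh) hxH) this
    refine ⟨?_, ?_⟩
    · ext x
      constructor
      · rintro ⟨y, hy, rfl⟩
        exact hαH y hy
      · intro hx
        exact ⟨α x, hαH x hx, hα x⟩
    · intro g
      by_cases hg : g ∈ H
      · refine ⟨1, ⟨Set.mem_insert _ _, by simpa using hg⟩, ?_⟩
        rintro t ⟨ht, htH⟩
        rcases ht with rfl | htS
        · rfl
        · exfalso
          have : t ∈ H := by
            have := mul_mem (inv_mem htH) hg
            simpa [mul_assoc] using this
          exact hHS t this htS
      · obtain ⟨x, ⟨hxH, hxadj⟩, huniq⟩ := hcode g hg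
        set s : G := α (g⁻¹) * x with hs_def
        have hsS : s ∈ S := hxadj
        refine ⟨(α s)⁻¹, ⟨Set.mem_insert_of_mem _ (hSinv s hsS), ?_⟩, ?_⟩
        · have : g * ((α s)⁻¹)⁻¹ = α x := by
            rw [inv_inv, hs_def, hcomp, ← mul_assoc, mul_inv_cancel, one_mul]
          rw [this]
          exact hαH x hxH
        · rintro t' ⟨ht', hgt'⟩
          rcases ht' with rfl | ht'S
          · exact absurd (by simpa using hgt') hg
          · -- x' := α (g * t'⁻¹) is a neighbor of g in H
            have hx'H : α (g * t'⁻¹) ∈ H := hαH _ hgt'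
            have hadj' : GCAdj α S g (α (g * t'⁻¹)) := by
              have : α (g⁻¹) * α (g * t'⁻¹) = (α t')⁻¹ := by
                rw [← map_mul, ← map_inv]
                congr 1
                group
              unfold GCAdj
              rw [this]
              exact hSinv t' ht'S
            have hx' : α (g * t'⁻¹) = x := huniq _ ⟨hx'H, hadj'⟩
            have h1 : g * t'⁻¹ = α x := by rw [← hx', hα]
            have h2 : α s = g⁻¹ * α x := by rw [hs_def, hcomp]
            have : t'⁻¹ = (α s)⁻¹⁻¹ := by
              rw [inv_inv, h2, ← h1, ← mul_assoc, inv_mul_cancel, one_mul]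
            exact inv_injective this
  · rintro ⟨hαHimg, hcoset⟩
    have hαH : ∀ h ∈ H, α h ∈ H := by
      intro h hh
      have : α h ∈ (⇑α) '' (H : Set G) := Set.mem_image_of_mem _ hh
      rwa [hαHimg] at this
    have hHS : ∀ h ∈ H, h ∉ S := by
      intro h hh hs
      obtain ⟨t₀, -, hu⟩ := hcoset h
      have e1 : (1 : G) = t₀ := hu 1 ⟨Set.mem_insert _ _, by simpa using hh⟩
      have e2 : h = t₀ := hu h ⟨Set.mem_insert_of_mem _ hs, by rw [mul_inv_cancel]; exact one_mem H⟩
      exact hone (e1 ▸ e2 ▸ hs)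
    constructor
    · intro x hx y hy hadj
      have : α (x⁻¹) * y ∈ H := mul_mem (by rw [map_inv]; exact inv_mem (hαH x hx)) hy
      exact hHS _ this hadj
    · intro g hg
      obtain ⟨t, ⟨ht, hgt⟩, hu⟩ := hcoset g
      have htS : t ∈ S := by
        rcases ht with rfl | h
        · exact absurd (by simpa using hgt) hg
        · exact h
      refine ⟨α (g * t⁻¹), ⟨hαH _ hgt, ?_⟩, ?_⟩
      · have : α (g⁻¹) * α (g * t⁻¹) = (α t)⁻¹ := by
          rw [← map_mul, ← map_inv]
          congr 1
          group
        unfold GCAdj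
        rw [this]
        exact hSinv t htS
      · rintro x' ⟨hx'H, hx'adj⟩
        set s' : G := α (g⁻¹) * x' with hs'_def
        have hs'S : s' ∈ S := hx'adj
        have ht'S : (α s')⁻¹ ∈ S := hSinv s' hs'S
        have h2 : α s' = g⁻¹ * α x' := by rw [hs'_def, hcomp]
        have hgt' : g * ((α s')⁻¹)⁻¹ ∈ H := by
          rw [inv_inv, h2, ← mul_assoc, mul_inv_cancel, one_mul]
          exact hαH _ hx'H
        have heq : (α s')⁻¹ = t := hu _ ⟨Set.mem_insert_of_mem _ ht'S, hgt'⟩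
        have : α x' = g * t⁻¹ := by
          rw [← heq, inv_inv, h2, ← mul_assoc, mul_inv_cancel, one_mul]
        rw [← this, hα]
end

section
/- Let G be a finite group, α an involutory automorphism, S a generalized Cayley subset induced by α, and H ≤ G a perfect code of GC(G, S, α). Then {e} ∪ S is simultaneously a set of right coset representatives of H and a set of left coset representatives of H in G. -/
open Pointwise

variable {G : Type*}

theorem stmt7 [Group G] [Fintype G] (α : G ≃* G) (hα : ∀ g : G, α (α g) = g)
    (S : Set G) (hS : IsGenCayleySubset α S) (H : Subgroup G)
    (hpc : IsPerfectCode α S (H : Set G)) :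
    (∀ g : G, ∃! t, t ∈ insert (1 : G) S ∧ g * t⁻¹ ∈ H) ∧
    (∀ g : G, ∃! t, t ∈ insert (1 : G) S ∧ t⁻¹ * g ∈ H) := by
  obtain ⟨hS1, hS2⟩ := hS
  -- key closure property: s ∈ S → α (s⁻¹) ∈ S
  have key : ∀ s ∈ S, α (s⁻¹) ∈ S := by
    intro s hs
    have h1 : s⁻¹ ∈ S⁻¹ := Set.inv_mem_inv.mpr hs
    rw [← hS2] at h1
    obtain ⟨u, hu, hus⟩ := h1
    rw [← hus, hα]
    exact hu
  -- no element of S lies in H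
  have sNotH : ∀ s ∈ S, s ∉ (H : Set G) := by
    intro s hs hsH
    exact hpc.1 1 H.one_mem s hsH (by simpa [GCAdj] using hs)
  -- H is α-invariant
  have hH : ∀ x ∈ H, α x ∈ H := by
    intro x hx
    by_contra hax
    obtain ⟨y, ⟨hyH, hadj⟩, -⟩ := hpc.2 (α x) hax
    have h2 : x⁻¹ * y ∈ S := by
      have : α ((α x)⁻¹) = x⁻¹ := by rw [map_inv, hα]
      rwa [GCAdj, this] at hadj
    exact sNotH _ h2 (H.mul_mem (H.inv_mem hx) hyH)
  have right : ∀ g : G, ∃! t, t ∈ insert (1 : G) S ∧ g * t⁻¹ ∈ H := by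
    intro g
    by_cases hg : g ∈ H
    · refine ⟨1, ⟨Set.mem_insert _ _, by simpa using hg⟩, ?_⟩
      rintro t ⟨ht, htH⟩
      rcases Set.mem_insert_iff.mp ht with rfl | hts
      · rfl
      · exfalso
        have : t ∈ (H : Set G) := by
          have h3 := H.mul_mem (H.inv_mem htH) hg
          simpa [mul_assoc] using h3
        exact sNotH t hts this
    · obtain ⟨x, ⟨hxH, hadj⟩, huniq⟩ := hpc.2 g hg
      have hadj' : α (g⁻¹) * x ∈ S := hadj
      refine ⟨α ((α (g⁻¹) * x)⁻¹), ⟨Set.mem_insert_iff.mpr (Or.inr (key _ hadj')), ?_⟩, ?_⟩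
      · have hcalc : g * (α ((α (g⁻¹) * x)⁻¹))⁻¹ = α x := by
          rw [map_inv, inv_inv, map_mul, hα]
          group
        rw [hcalc]
        exact hH x hxH
      · rintro t ⟨ht, htH⟩
        rcases Set.mem_insert_iff.mp ht with rfl | hts
        · exfalso
          exact hg (by simpa using htH)
        · have hαh : α (g * t⁻¹) ∈ H := hH _ htH
          have hadj2 : GCAdj α S g (α (g * t⁻¹)) := by
            show α (g⁻¹) * α (g * t⁻¹) ∈ S
            have : α (g⁻¹) * α (g * t⁻¹) = α (t⁻¹) := by
              rw [← map_mul]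
              congr 1
              group
            rw [this]
            exact key t hts
          have hx_eq : α (g * t⁻¹) = x := huniq _ ⟨hαh, hadj2⟩
          have : α (g⁻¹) * x = α (t⁻¹) := by
            rw [← hx_eq, ← map_mul]
            congr 1
            group
          rw [this]
          simp [map_inv, hα]
  refine ⟨right, ?_⟩
  intro g
  obtain ⟨u, ⟨hu, huH⟩, huniq⟩ := right (α (g⁻¹))
  have hmem : α (u⁻¹) ∈ insert (1 : G) S := by
    rcases Set.mem_insert_iff.mp hu with rfl | hus
    · simp
    · exact Set.mem_insert_iff.mpr (Or.inr (key u hus))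
  refine ⟨α (u⁻¹), ⟨hmem, ?_⟩, ?_⟩
  · have h1 : α (α (g⁻¹) * u⁻¹) ∈ H := hH _ huH
    have h2 : α (α (g⁻¹) * u⁻¹) = g⁻¹ * α (u⁻¹) := by rw [map_mul, hα]
    rw [h2] at h1
    have h3 := H.inv_mem h1
    simpa [mul_inv_rev] using h3
  · rintro t ⟨ht, htH⟩
    have hu' : α (t⁻¹) ∈ insert (1 : G) S := by
      rcases Set.mem_insert_iff.mp ht with rfl | hts
      · simp
      · exact Set.mem_insert_iff.mpr (Or.inr (key t hts))
    have hprop : α (g⁻¹) * (α (t⁻¹))⁻¹ ∈ H := by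
      have h4 : g⁻¹ * t ∈ H := by simpa [mul_inv_rev] using H.inv_mem htH
      have h5 : α (g⁻¹ * t) ∈ H := hH _ h4
      have h6 : α (g⁻¹) * (α (t⁻¹))⁻¹ = α (g⁻¹ * t) := by
        simp [map_mul, map_inv]
      rw [h6]
      exact h5
    have heq : α (t⁻¹) = u := huniq _ ⟨hu', hprop⟩
    rw [← heq]
    simp [map_inv, hα]
end

section
/- Let G be a finite group, α an involutory automorphism, S a generalized Cayley subset induced by α, and g a fixed point of α. Then g⁻¹Sg is also a generalized Cayley subset of G induced by α; moreover, if a subgroup H is a perfect code of GC(G, S, α), then g⁻¹Hg is a perfect code of GC(G, g⁻¹Sg, α). -/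
open Pointwise

variable {G : Type*}

theorem stmt9 [Group G] [Fintype G] (α : G ≃* G) (hα : ∀ g : G, α (α g) = g)
    (S : Set G) (hS : IsGenCayleySubset α S) (g : G) (hg : α g = g)
    (H : Subgroup G) :
    IsGenCayleySubset α ((fun s => g⁻¹ * s * g) '' S) ∧
    (IsPerfectCode α S (H : Set G) →
      IsPerfectCode α ((fun s => g⁻¹ * s * g) '' S)
        ((fun h => g⁻¹ * h * g) '' (H : Set G))) := by
  obtain ⟨hS1, hS2⟩ := hS
  have hginv : α g⁻¹ = g⁻¹ := by rw [map_inv, hg]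
  have hmem : ∀ (A : Set G) (y : G), y ∈ (fun s => g⁻¹ * s * g) '' A ↔ g * y * g⁻¹ ∈ A := by
    intro A y
    constructor
    · rintro ⟨s, hs, rfl⟩
      have h : g * (g⁻¹ * s * g) * g⁻¹ = s := by group
      rwa [h]
    · intro h
      exact ⟨g * y * g⁻¹, h, by group⟩
  have hSinv : ∀ w : G, α w ∈ S ↔ w⁻¹ ∈ S := by
    intro w
    rw [← Set.mem_inv, ← hS2]
    constructor
    · intro h; exact ⟨α w, h, hα w⟩
    · rintro ⟨s, hs, rfl⟩; rwa [hα]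
  have hconj : ∀ x : G, α (g * x * g⁻¹) = g * α x * g⁻¹ := by
    intro x; rw [map_mul, map_mul, hg, hginv]
  have hAdj : ∀ x y : G, GCAdj α ((fun s => g⁻¹ * s * g) '' S) x y ↔
      GCAdj α S (g * x * g⁻¹) (g * y * g⁻¹) := by
    intro x y
    unfold GCAdj
    rw [hmem]
    have h1 : g * (α x⁻¹ * y) * g⁻¹ = α (g * x * g⁻¹)⁻¹ * (g * y * g⁻¹) := by
      rw [mul_inv_rev, mul_inv_rev, inv_inv, map_mul, map_mul, hg, hginv, map_inv]
      group
    rw [h1]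
  constructor
  · constructor
    · rw [Set.eq_empty_iff_forall_notMem]
      rintro y ⟨hyT, x, hx⟩
      have h1 : g * y * g⁻¹ ∈ S := (hmem S y).mp hyT
      have h2 : g * y * g⁻¹ ∈ omegaSet α := by
        refine ⟨x * g⁻¹, ?_⟩
        have h3 : α ((x * g⁻¹)⁻¹) * (x * g⁻¹) = g * (α x⁻¹ * x) * g⁻¹ := by
          rw [mul_inv_rev, inv_inv, map_mul, hg]; group
        rw [h3, hx]
      exact Set.eq_empty_iff_forall_notMem.mp hS1 (g * y * g⁻¹) ⟨h1, h2⟩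
    · ext z
      have himg : z ∈ (⇑α) '' ((fun s => g⁻¹ * s * g) '' S) ↔
          α z ∈ (fun s => g⁻¹ * s * g) '' S := by
        constructor
        · rintro ⟨t, ht, rfl⟩; rwa [hα]
        · intro h; exact ⟨α z, h, hα z⟩
      rw [himg, Set.mem_inv, hmem, hmem, ← hconj, hSinv]
      have h4 : (g * z * g⁻¹)⁻¹ = g * z⁻¹ * g⁻¹ := by group
      rw [h4]
  · rintro ⟨hInd, hDom⟩
    constructor
    · intro x hx y hy
      rw [hAdj]
      exact hInd _ ((hmem _ x).mp hx) _ ((hmem _ y).mp hy)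
    · intro x hx
      have hx' : g * x * g⁻¹ ∉ (H : Set G) := fun h => hx ((hmem _ x).mpr h)
      obtain ⟨c, ⟨hcH, hcAdj⟩, huniq⟩ := hDom _ hx'
      refine ⟨g⁻¹ * c * g, ⟨⟨c, hcH, rfl⟩, ?_⟩, ?_⟩
      · rw [hAdj]
        have h5 : g * (g⁻¹ * c * g) * g⁻¹ = c := by group
        rwa [h5]
      · rintro y ⟨hyH, hyAdj⟩
        have h1 := huniq (g * y * g⁻¹) ⟨(hmem _ y).mp hyH, (hAdj x y).mp hyAdj⟩
        have h6 : y = g⁻¹ * (g * y * g⁻¹) * g := by group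
        rw [h6, h1]
end

section
/- Let G₁, G₂ be finite groups with involutory automorphisms α₁, α₂, and S₁, S₂ generalized Cayley subsets of G₁, G₂ induced by α₁, α₂ respectively. Then T₂ = (S₁ × S₂) ∪ ({e} × S₂) ∪ (S₁ × {e}) is a generalized Cayley subset of G₁ × G₂ induced by the componentwise automorphism ᾱ(g₁,g₂) = (α₁(g₁), α₂(g₂)). -/
open Pointwise

variable {G : Type*}

variable {G₁ G₂ : Type*}

theorem stmt12 [Group G₁] [Group G₂] [Fintype G₁] [Fintype G₂]
    (α₁ : G₁ ≃* G₁) (hα₁ : ∀ g : G₁, α₁ (α₁ g) = g)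
    (α₂ : G₂ ≃* G₂) (hα₂ : ∀ g : G₂, α₂ (α₂ g) = g)
    (S₁ : Set G₁) (hS₁ : IsGenCayleySubset α₁ S₁)
    (S₂ : Set G₂) (hS₂ : IsGenCayleySubset α₂ S₂) :
    IsGenCayleySubset (α₁.prodCongr α₂)
      ((S₁ ×ˢ S₂) ∪ (({1} : Set G₁) ×ˢ S₂) ∪ (S₁ ×ˢ ({1} : Set G₂))) := by
  obtain ⟨h1d, h1i⟩ := hS₁
  obtain ⟨h2d, h2i⟩ := hS₂
  have not1 : ∀ a ∈ S₁, a ∉ omegaSet α₁ := fun a ha hw =>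
    Set.eq_empty_iff_forall_notMem.mp h1d a ⟨ha, hw⟩
  have not2 : ∀ a ∈ S₂, a ∉ omegaSet α₂ := fun a ha hw =>
    Set.eq_empty_iff_forall_notMem.mp h2d a ⟨ha, hw⟩
  constructor
  · apply Set.eq_empty_iff_forall_notMem.mpr
    rintro ⟨a, b⟩ ⟨hmem, g, hg⟩
    have hg1 : α₁ g.1⁻¹ * g.1 = a := congrArg Prod.fst hg
    have hg2 : α₂ g.2⁻¹ * g.2 = b := congrArg Prod.snd hg
    rcases hmem with (⟨ha, _⟩ | ⟨_, hb⟩) | ⟨ha, _⟩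
    · exact not1 a ha ⟨g.1, hg1⟩
    · exact not2 b hb ⟨g.2, hg2⟩
    · exact not1 a ha ⟨g.1, hg1⟩
  · ext ⟨a, b⟩
    constructor
    · rintro ⟨⟨x, y⟩, hxy, hxyeq⟩
      have hx : α₁ x = a := congrArg Prod.fst hxyeq
      have hy : α₂ y = b := congrArg Prod.snd hxyeq
      have ka : x ∈ S₁ → a⁻¹ ∈ S₁ := fun h => Set.mem_inv.mp (h1i ▸ ⟨x, h, hx⟩)
      have kb : y ∈ S₂ → b⁻¹ ∈ S₂ := fun h => Set.mem_inv.mp (h2i ▸ ⟨y, h, hy⟩)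
      rw [Set.mem_inv, show (a, b)⁻¹ = (a⁻¹, b⁻¹) from rfl]
      rcases hxy with (⟨hx1, hy1⟩ | ⟨hx1, hy1⟩) | ⟨hx1, hy1⟩
      · exact Or.inl (Or.inl ⟨ka hx1, kb hy1⟩)
      · refine Or.inl (Or.inr ⟨?_, kb hy1⟩)
        simp only [Set.mem_singleton_iff] at hx1 ⊢
        rw [← hx, hx1, map_one, inv_one]
      · refine Or.inr ⟨ka hx1, ?_⟩
        simp only [Set.mem_singleton_iff] at hy1 ⊢
        rw [← hy, hy1, map_one, inv_one]
    · intro hmem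
      refine ⟨(α₁ a, α₂ b), ?_, ?_⟩
      · have key1 : a ∈ S₁⁻¹ → α₁ a ∈ S₁ := by
          intro ha
          rw [← h1i] at ha
          obtain ⟨x, hx, hxe⟩ := ha
          rw [← hxe, hα₁]; exact hx
        have key2 : b ∈ S₂⁻¹ → α₂ b ∈ S₂ := by
          intro hb
          rw [← h2i] at hb
          obtain ⟨y, hy, hye⟩ := hb
          rw [← hye, hα₂]; exact hy
        rcases hmem with (⟨ha, hb⟩ | ⟨ha, hb⟩) | ⟨ha, hb⟩
        · exact Or.inl (Or.inl ⟨key1 ha, key2 hb⟩)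
        · refine Or.inl (Or.inr ⟨?_, key2 hb⟩)
          simp only [Set.mem_singleton_iff, Set.mem_inv] at ha ⊢
          rw [show a = 1 from inv_eq_one.mp ha, map_one]
        · refine Or.inr ⟨key1 ha, ?_⟩
          simp only [Set.mem_singleton_iff, Set.mem_inv] at hb ⊢
          rw [show b = 1 from inv_eq_one.mp hb, map_one]
      · show (α₁ (α₁ a), α₂ (α₂ b)) = (a, b)
        rw [hα₁, hα₂]
end

section
/- Let H₁ be a subgroup perfect code of GC(G₁, S₁, α₁) and H₂ a subgroup perfect code of GC(G₂, S₂, α₂). Then H₁ × H₂ is a subgroup perfect code of GC(G₁ × G₂, T₂, ᾱ), where T₂ = (S₁ × S₂) ∪ ({e} × S₂) ∪ (S₁ × {e}) and ᾱ is the componentwise product automorphism. -/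
open Pointwise

variable {G : Type*}

lemma code_alpha_mem [Group G] (α : G ≃* G) (hα : ∀ g, α (α g) = g)
    (S : Set G) (H : Subgroup G) (h : IsPerfectCode α S (H : Set G)) :
    ∀ g ∈ H, α g ∈ H := by
  intro g hg
  by_contra hmem
  obtain ⟨x, ⟨hxH, hxadj⟩, -⟩ := h.2 (α g) hmem
  have hs : g⁻¹ * x ∈ S := by
    have h1 : α ((α g)⁻¹) = g⁻¹ := by rw [map_inv, hα]
    simpa [GCAdj, h1] using hxadj
  exact h.1 1 (one_mem H) (g⁻¹ * x) (mul_mem (inv_mem hg) hxH)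
    (by simpa [GCAdj] using hs)

variable {G₁ G₂ : Type*}

theorem stmt13 [Group G₁] [Group G₂] [Fintype G₁] [Fintype G₂]
    (α₁ : G₁ ≃* G₁) (hα₁ : ∀ g : G₁, α₁ (α₁ g) = g)
    (α₂ : G₂ ≃* G₂) (hα₂ : ∀ g : G₂, α₂ (α₂ g) = g)
    (S₁ : Set G₁) (hS₁ : IsGenCayleySubset α₁ S₁)
    (S₂ : Set G₂) (hS₂ : IsGenCayleySubset α₂ S₂)
    (H₁ : Subgroup G₁) (H₂ : Subgroup G₂)
    (h₁ : IsPerfectCode α₁ S₁ (H₁ : Set G₁))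
    (h₂ : IsPerfectCode α₂ S₂ (H₂ : Set G₂)) :
    IsPerfectCode (α₁.prodCongr α₂)
      ((S₁ ×ˢ S₂) ∪ (({1} : Set G₁) ×ˢ S₂) ∪ (S₁ ×ˢ ({1} : Set G₂)))
      ((H₁.prod H₂ : Subgroup (G₁ × G₂)) : Set (G₁ × G₂)) := by
  have key₁ : ∀ g ∈ H₁, α₁ g ∈ H₁ := code_alpha_mem α₁ hα₁ S₁ H₁ h₁
  have key₂ : ∀ g ∈ H₂, α₂ g ∈ H₂ := code_alpha_mem α₂ hα₂ S₂ H₂ h₂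
  have adj_iff : ∀ g y : G₁ × G₂, GCAdj (α₁.prodCongr α₂)
      ((S₁ ×ˢ S₂) ∪ (({1} : Set G₁) ×ˢ S₂) ∪ (S₁ ×ˢ ({1} : Set G₂))) g y ↔
      ((GCAdj α₁ S₁ g.1 y.1 ∧ GCAdj α₂ S₂ g.2 y.2) ∨
       (y.1 = α₁ g.1 ∧ GCAdj α₂ S₂ g.2 y.2) ∨
       (GCAdj α₁ S₁ g.1 y.1 ∧ y.2 = α₂ g.2)) := by
    intro g y
    have e1 : α₁ g.1⁻¹ * y.1 = 1 ↔ y.1 = α₁ g.1 := by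
      rw [map_inv, inv_mul_eq_one, eq_comm]
    have e2 : α₂ g.2⁻¹ * y.2 = 1 ↔ y.2 = α₂ g.2 := by
      rw [map_inv, inv_mul_eq_one, eq_comm]
    simp only [GCAdj, Set.mem_union, Set.mem_prod, Set.mem_singleton_iff, Prod.inv_mk,
      MulEquiv.prodCongr, MulEquiv.coe_mk, Equiv.coe_fn_mk, Equiv.prodCongr_apply, Prod.map, Prod.fst_mul, Prod.snd_mul]
    rw [← e1, ← e2]
    constructor
    · rintro ((h | h) | h)
      · exact Or.inl h
      · exact Or.inr (Or.inl h)
      · exact Or.inr (Or.inr h)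
    · rintro (h | h | h)
      · exact Or.inl (Or.inl h)
      · exact Or.inl (Or.inr h)
      · exact Or.inr h
  have memH : ∀ y : G₁ × G₂, y ∈ ((H₁.prod H₂ : Subgroup (G₁ × G₂)) : Set (G₁ × G₂)) ↔
      y.1 ∈ H₁ ∧ y.2 ∈ H₂ := fun y => Iff.rfl
  constructor
  · intro x hx y hy hadj
    rw [memH] at hx hy
    rcases (adj_iff x y).1 hadj with ⟨ha, _⟩ | ⟨ha, hb⟩ | ⟨ha, _⟩
    · exact h₁.1 x.1 hx.1 y.1 hy.1 ha
    · exact h₂.1 x.2 hx.2 y.2 hy.2 hb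
    · exact h₁.1 x.1 hx.1 y.1 hy.1 ha
  · intro g hg
    rw [memH] at hg
    push_neg at hg
    by_cases hg1 : g.1 ∈ H₁
    · -- g.2 ∉ H₂
      have hg2 : g.2 ∉ H₂ := hg hg1
      obtain ⟨x₂, ⟨hx₂H, hx₂adj⟩, hx₂uniq⟩ := h₂.2 g.2 hg2
      refine ⟨(α₁ g.1, x₂), ⟨(memH _).2 ⟨key₁ g.1 hg1, hx₂H⟩, ?_⟩, ?_⟩
      · exact (adj_iff g _).2 (Or.inr (Or.inl ⟨rfl, hx₂adj⟩))
      · rintro y ⟨hyH, hyadj⟩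
        rw [memH] at hyH
        rcases (adj_iff g y).1 hyadj with ⟨ha, _⟩ | ⟨ha, hb⟩ | ⟨ha, _⟩
        · exact absurd ha (h₁.1 g.1 hg1 y.1 hyH.1)
        · exact Prod.ext ha (hx₂uniq y.2 ⟨hyH.2, hb⟩)
        · exact absurd ha (h₁.1 g.1 hg1 y.1 hyH.1)
    · by_cases hg2 : g.2 ∈ H₂
      · obtain ⟨x₁, ⟨hx₁H, hx₁adj⟩, hx₁uniq⟩ := h₁.2 g.1 hg1
        refine ⟨(x₁, α₂ g.2), ⟨(memH _).2 ⟨hx₁H, key₂ g.2 hg2⟩, ?_⟩, ?_⟩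
        · exact (adj_iff g _).2 (Or.inr (Or.inr ⟨hx₁adj, rfl⟩))
        · rintro y ⟨hyH, hyadj⟩
          rw [memH] at hyH
          rcases (adj_iff g y).1 hyadj with ⟨_, hb⟩ | ⟨ha, hb⟩ | ⟨ha, hb⟩
          · exact absurd hb (h₂.1 g.2 hg2 y.2 hyH.2)
          · exact absurd hb (h₂.1 g.2 hg2 y.2 hyH.2)
          · exact Prod.ext (hx₁uniq y.1 ⟨hyH.1, ha⟩) hb
      · obtain ⟨x₁, ⟨hx₁H, hx₁adj⟩, hx₁uniq⟩ := h₁.2 g.1 hg1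
        obtain ⟨x₂, ⟨hx₂H, hx₂adj⟩, hx₂uniq⟩ := h₂.2 g.2 hg2
        refine ⟨(x₁, x₂), ⟨(memH _).2 ⟨hx₁H, hx₂H⟩, ?_⟩, ?_⟩
        · exact (adj_iff g _).2 (Or.inl ⟨hx₁adj, hx₂adj⟩)
        · rintro y ⟨hyH, hyadj⟩
          rw [memH] at hyH
          rcases (adj_iff g y).1 hyadj with ⟨ha, hb⟩ | ⟨ha, hb⟩ | ⟨ha, hb⟩
          · exact Prod.ext (hx₁uniq y.1 ⟨hyH.1, ha⟩) (hx₂uniq y.2 ⟨hyH.2, hb⟩)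
          · refine absurd ?_ hg1
            have := key₁ y.1 hyH.1
            rw [ha, hα₁] at this
            exact this
          · refine absurd ?_ hg2
            have := key₂ y.2 hyH.2
            rw [hb, hα₂] at this
            exact this
end

section
/- Let G be a finite abelian group, α an involutory automorphism of G, and H a subgroup of odd order with H ⊆ ω_α(G). Then H is a perfect code of some generalized Cayley graph of G induced by α if and only if H = ω_α(G). -/
open Pointwise

variable {G : Type*}

section Aux

variable [CommGroup G]

lemma omega_mem_basic (α : G ≃* G) (g : G) : α (g⁻¹) * g ∈ omegaSet α := ⟨g, rfl⟩

lemma omega_mul {α : G ≃* G} {x y : G} (hx : x ∈ omegaSet α) (hy : y ∈ omegaSet α) :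
    x * y ∈ omegaSet α := by
  obtain ⟨g, rfl⟩ := hx
  obtain ⟨k, rfl⟩ := hy
  refine ⟨g * k, ?_⟩
  simp only [mul_inv_rev, map_mul]
  rw [mul_comm (α (k⁻¹)) (α (g⁻¹)), mul_mul_mul_comm]

lemma omega_inv {α : G ≃* G} {x : G} (hx : x ∈ omegaSet α) : x⁻¹ ∈ omegaSet α := by
  obtain ⟨g, rfl⟩ := hx
  refine ⟨g⁻¹, ?_⟩
  simp only [inv_inv, map_inv, mul_inv_rev]
  rw [mul_comm]

lemma omega_apply {α : G ≃* G} (hα : ∀ g, α (α g) = g) {x : G} (hx : x ∈ omegaSet α) :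
    α x = x⁻¹ := by
  obtain ⟨g, rfl⟩ := hx
  simp only [map_mul, map_inv, hα, mul_inv_rev, inv_inv]

lemma omega_apply_inv {α : G ≃* G} (hα : ∀ g, α (α g) = g) {x : G} (hx : x ∈ omegaSet α) :
    α (x⁻¹) = x := by
  rw [map_inv, omega_apply hα hx, inv_inv]

/-- Key lemma: if H = ω, |H| odd, and g² ∈ H, then α g = g⁻¹. -/
lemma lemA {α : G ≃* G} (hα : ∀ g, α (α g) = g) {H : Subgroup G}
    (hodd : Odd (Nat.card H)) (hH : (H : Set G) = omegaSet α)
    {g : G} (hg : g * g ∈ H) : α g = g⁻¹ := by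
  have hmem : g⁻¹ * α g ∈ H := by
    have h1 : (α (g⁻¹) * g)⁻¹ ∈ omegaSet α := omega_inv (omega_mem_basic α g)
    have h2 : (α (g⁻¹) * g)⁻¹ = g⁻¹ * α g := by
      rw [map_inv, mul_inv_rev, inv_inv]
    rw [h2] at h1
    rw [← SetLike.mem_coe, hH]
    exact h1
  have huH : α g * g ∈ H := by
    have := H.mul_mem hg hmem
    have heq : g * g * (g⁻¹ * α g) = α g * g := by
      rw [mul_comm (α g) g]; group
    rwa [heq] at this
  have hαu : α (α g * g) = α g * g := by
    rw [map_mul, hα, mul_comm]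
  have huω : α g * g ∈ omegaSet α := by rw [← hH] at *; exact huH
  have hsq : (α g * g) * (α g * g) = 1 := by
    have := omega_apply hα huω
    rw [hαu] at this
    exact mul_eq_one_iff_eq_inv.mpr this
  -- element of odd-order group squaring to 1 is 1
  set u : H := ⟨α g * g, huH⟩ with hu
  have hu2 : u * u = 1 := by
    ext; push_cast [hu]; exact hsq
  have hord : orderOf u ∣ 2 := orderOf_dvd_of_pow_eq_one (by rw [pow_two]; exact hu2)
  have hord2 : orderOf u ∣ Nat.card H := orderOf_dvd_natCard u
  have h1 : orderOf u = 1 := by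
    rcases (Nat.dvd_prime Nat.prime_two).mp hord with h | h
    · exact h
    · exfalso
      rw [h] at hord2
      rw [Nat.odd_iff] at hodd
      omega
  have : u = 1 := orderOf_eq_one_iff.mp h1
  have : α g * g = 1 := by
    have := congrArg (Subtype.val) this
    simpa [hu] using this
  exact eq_inv_of_mul_eq_one_left this

lemma exists_code {α : G ≃* G} (hα : ∀ g, α (α g) = g) {H : Subgroup G}
    (hodd : Odd (Nat.card H)) (hH : (H : Set G) = omegaSet α) [Countable G] :
    ∃ S : Set G, IsGenCayleySubset α S ∧ IsPerfectCode α S (H : Set G) := by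
  classical
  have hcq : Countable (G ⧸ H) := QuotientGroup.mk_surjective.countable
  obtain ⟨f, hf⟩ := Countable.exists_injective_nat (G ⧸ H)
  set τ : G → G := fun g => (α g)⁻¹ with hτdef
  have hττ : ∀ g, τ (τ g) = g := by
    intro g; simp [hτdef, hα]
  have hmemτ : ∀ g : G, τ g * g ∈ H := by
    intro g
    rw [← SetLike.mem_coe, hH]
    have : α (g⁻¹) * g ∈ omegaSet α := omega_mem_basic α g
    simpa [hτdef, map_inv] using this
  have hmkτ : ∀ g : G, (QuotientGroup.mk (τ g) : G ⧸ H) = (QuotientGroup.mk g)⁻¹ := by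
    intro g
    have : (QuotientGroup.mk (τ g * g) : G ⧸ H) = 1 :=
      (QuotientGroup.eq_one_iff _).mpr (hmemτ g)
    rw [QuotientGroup.mk_mul] at this
    exact eq_inv_of_mul_eq_one_left this
  -- the pick function
  set pick : (G ⧸ H) → G := fun C =>
    if C⁻¹ = C then C.out else if f C < f C⁻¹ then C.out else τ (C⁻¹).out with hpickdef
  have hpick_mk : ∀ C, (QuotientGroup.mk (pick C) : G ⧸ H) = C := by
    intro C
    rw [hpickdef]
    by_cases h1 : C⁻¹ = C
    · simp only [h1, if_pos rfl]
      exact QuotientGroup.out_eq' C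
    · simp only [if_neg h1]
      by_cases h2 : f C < f C⁻¹
      · simp only [if_pos h2]
        exact QuotientGroup.out_eq' C
      · simp only [if_neg h2]
        rw [hmkτ, QuotientGroup.out_eq', inv_inv]
  have hpick_τ : ∀ C, τ (pick C) = pick C⁻¹ := by
    intro C
    by_cases h1 : C⁻¹ = C
    · have hsq : C.out * C.out ∈ H := by
        rw [← QuotientGroup.eq_one_iff, QuotientGroup.mk_mul, QuotientGroup.out_eq']
        exact mul_eq_one_iff_eq_inv.mpr h1.symm
      have : α C.out = C.out⁻¹ := lemA hα hodd hH hsq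
      simp only [hpickdef, if_pos h1, h1]
      simp [hτdef, this]
    · by_cases h2 : f C < f C⁻¹
      · have e1 : pick C = C.out := by simp only [hpickdef, if_neg h1, if_pos h2]
        have h1' : ¬ ((C⁻¹)⁻¹ = C⁻¹) := by
          rw [inv_inv]; intro h; exact h1 h.symm
        have h2' : ¬ (f C⁻¹ < f (C⁻¹)⁻¹) := by rw [inv_inv]; omega
        have e2 : pick C⁻¹ = τ (C⁻¹)⁻¹.out := by
          simp only [hpickdef, if_neg h1', if_neg h2']
        rw [e1, e2, inv_inv]
      · have h3 : f C⁻¹ < f C := by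
          have : f C ≠ f C⁻¹ := fun h => h1 (hf h).symm
          omega
        have e1 : pick C = τ (C⁻¹).out := by simp only [hpickdef, if_neg h1, if_neg h2]
        have h1' : ¬ ((C⁻¹)⁻¹ = C⁻¹) := by
          rw [inv_inv]; intro h; exact h1 h.symm
        have h2' : f C⁻¹ < f (C⁻¹)⁻¹ := by rw [inv_inv]; exact h3
        have e2 : pick C⁻¹ = (C⁻¹).out := by
          simp only [hpickdef, if_neg h1', if_pos h2']
        rw [e1, e2, hττ]
  refine ⟨pick '' {C : G ⧸ H | C ≠ 1}, ⟨?_, ?_⟩, ?_, ?_⟩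
  · -- S ∩ ω = ∅
    ext z
    simp only [Set.mem_inter_iff, Set.mem_image, Set.mem_setOf_eq, Set.mem_empty_iff_false,
      iff_false, not_and]
    rintro ⟨C, hC, rfl⟩ hz
    rw [← hH] at hz
    have h1 := (QuotientGroup.eq_one_iff (pick C)).mpr hz
    rw [hpick_mk C] at h1
    exact hC h1
  · -- α '' S = S⁻¹
    ext z
    simp only [Set.mem_image, Set.mem_inv, Set.mem_setOf_eq]
    constructor
    · rintro ⟨s, ⟨C, hC, rfl⟩, rfl⟩
      refine ⟨C⁻¹, inv_ne_one.mpr hC, ?_⟩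
      rw [← hpick_τ C]
    · rintro ⟨C, hC, hz⟩
      refine ⟨pick C⁻¹, ⟨C⁻¹, inv_ne_one.mpr hC, rfl⟩, ?_⟩
      rw [← hpick_τ C]
      show α ((α (pick C))⁻¹) = z
      rw [map_inv, hα, hz, inv_inv]
  · -- independence
    intro x hx y hy hadj
    have hxi : α (x⁻¹) = x := omega_apply_inv hα (by rw [← hH]; exact hx)
    have hxy : x * y ∈ H := H.mul_mem hx hy
    unfold GCAdj at hadj
    rw [hxi] at hadj
    obtain ⟨C, hC, hCe⟩ := hadj
    have h1 := (QuotientGroup.eq_one_iff (pick C)).mpr (hCe ▸ hxy)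
    rw [hpick_mk C] at h1
    exact hC h1
  · -- perfect code property
    intro g hg
    have hgC : (QuotientGroup.mk g : G ⧸ H) ≠ 1 := fun h =>
      hg ((QuotientGroup.eq_one_iff g).mp h)
    have hmkαinv : (QuotientGroup.mk (α (g⁻¹)) : G ⧸ H) = (QuotientGroup.mk g)⁻¹ := by
      have : (QuotientGroup.mk (α (g⁻¹) * g) : G ⧸ H) = 1 :=
        (QuotientGroup.eq_one_iff _).mpr (by rw [← SetLike.mem_coe, hH]; exact omega_mem_basic α g)
      rw [QuotientGroup.mk_mul] at this
      exact eq_inv_of_mul_eq_one_left this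
    refine ⟨α g * pick (QuotientGroup.mk g)⁻¹, ⟨?_, ?_⟩, ?_⟩
    · -- membership in H
      rw [SetLike.mem_coe, ← QuotientGroup.eq_one_iff, QuotientGroup.mk_mul, hpick_mk]
      have : (QuotientGroup.mk (α g) : G ⧸ H) = QuotientGroup.mk g := by
        have h' := hmkτ g
        simp only [hτdef, QuotientGroup.mk_inv] at h'
        exact inv_injective h'
      rw [this, mul_inv_cancel]
    · -- adjacency
      unfold GCAdj
      have : α (g⁻¹) * (α g * pick (QuotientGroup.mk g)⁻¹) = pick (QuotientGroup.mk g)⁻¹ := by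
        rw [map_inv]; group
      rw [this]
      exact ⟨(QuotientGroup.mk g)⁻¹, inv_ne_one.mpr hgC, rfl⟩
    · -- uniqueness
      rintro y ⟨hyH, hyadj⟩
      unfold GCAdj at hyadj
      obtain ⟨C, hC, hCe⟩ := hyadj
      have hCval : C = (QuotientGroup.mk g)⁻¹ := by
        rw [← hpick_mk C, hCe, QuotientGroup.mk_mul, hmkαinv,
          (QuotientGroup.eq_one_iff y).mpr (SetLike.mem_coe.mp hyH), mul_one]
      rw [hCval] at hCe
      have : y = α g * pick (QuotientGroup.mk g)⁻¹ := by
        rw [hCe, map_inv]; group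
      exact this

end Aux

theorem stmt15 {G : Type*} [CommGroup G] [Fintype G] (α : G ≃* G)
    (hα : ∀ g : G, α (α g) = g) (H : Subgroup G)
    (hodd : Odd (Nat.card H)) (hsub : (H : Set G) ⊆ omegaSet α) :
    (∃ S : Set G, IsGenCayleySubset α S ∧ IsPerfectCode α S (H : Set G)) ↔
      (H : Set G) = omegaSet α := by
  constructor
  · rintro ⟨S, ⟨hS1, hS2⟩, hind, hcode⟩
    refine Set.Subset.antisymm hsub ?_
    intro x hx
    by_contra hxH
    obtain ⟨y, ⟨hyH, hy⟩, -⟩ := hcode x hxH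
    unfold GCAdj at hy
    rw [omega_apply_inv hα hx] at hy
    have h2 : x * y ∈ omegaSet α := omega_mul hx (hsub hyH)
    have : x * y ∈ S ∩ omegaSet α := ⟨hy, h2⟩
    rw [hS1] at this
    exact this
  · intro hH
    exact exists_code hα hodd hH
end

section
/- Let G be a finite abelian group, α an involutory automorphism of G, and H a subgroup of G. Then H is a perfect code of some generalized Cayley graph of G induced by α if and only if α(H) = H and for every g ∈ G \ H with α(g)g ∈ H, there exists h ∈ H such that hg ∉ ω_α(G) and α(hg)·hg = e. -/
open Pointwise

variable {G : Type*}

section Aux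

variable [CommGroup G]

private lemma beta_beta (α : G ≃* G) (hα : ∀ g : G, α (α g) = g) (x : G) :
    (α (α x)⁻¹)⁻¹ = x := by
  rw [map_inv, hα, inv_inv]

private lemma beta_omega_fix (α : G ≃* G) (hα : ∀ g : G, α (α g) = g) (x : G)
    (hx : x ∈ omegaSet α) : (α x)⁻¹ = x := by
  obtain ⟨g, rfl⟩ := hx
  rw [map_mul, map_inv, map_inv, hα, mul_inv, inv_inv, mul_comm]

/-- The construction direction. -/
private lemma backward_dir (α : G ≃* G) (hα : ∀ g : G, α (α g) = g) (H : Subgroup G)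
    (hH : ∀ h : G, h ∈ H → α h ∈ H)
    (hyp : ∀ g : G, g ∉ H → α g * g ∈ H →
      ∃ h ∈ H, h * g ∉ omegaSet α ∧ α (h * g) * (h * g) = 1) :
    ∃ S : Set G, IsGenCayleySubset α S ∧ IsPerfectCode α S (H : Set G) := by
  classical
  set β : G → G := fun x => (α x)⁻¹ with hβ
  have hβH : ∀ x : G, x ∈ H ↔ β x ∈ H := by
    intro x
    constructor
    · intro hx; exact inv_mem (hH x hx)
    · intro hx
      have := hH _ hx
      simp only [hβ, map_inv, hα] at this
      simpa using inv_mem this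
  -- the induced map on the quotient
  set f : G ⧸ H → G ⧸ H := fun C => QuotientGroup.mk (β C.out) with hfdef
  have hf : ∀ g : G, f (QuotientGroup.mk g) = QuotientGroup.mk (β g) := by
    intro g
    rw [hfdef]
    have h1 : QuotientGroup.mk ((QuotientGroup.mk g : G ⧸ H).out)
        = (QuotientGroup.mk g : G ⧸ H) := QuotientGroup.out_eq' _
    rw [QuotientGroup.eq] at h1 ⊢
    have h2 : β (((QuotientGroup.mk g : G ⧸ H).out)⁻¹ * g) ∈ H := (hβH _).mp h1
    simp only [hβ, map_mul, map_inv, mul_inv, inv_inv] at h2 ⊢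
    exact h2
  have hff : ∀ C : G ⧸ H, f (f C) = C := by
    intro C
    obtain ⟨g, rfl⟩ := QuotientGroup.mk_surjective C
    rw [hf g, hf (β g)]
    simp only [hβ]
    rw [beta_beta α hα]
  have hf1 : ∀ C : G ⧸ H, C ≠ 1 → f C ≠ 1 := by
    intro C hC h1
    apply hC
    obtain ⟨g, rfl⟩ := QuotientGroup.mk_surjective C
    rw [hf g] at h1
    rw [QuotientGroup.eq_one_iff] at h1 ⊢
    exact (hβH g).mpr h1
  -- choice of representatives
  have hp : ∀ C : G ⧸ H, ∃ x : G, C ≠ 1 →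
      (QuotientGroup.mk x = C ∧ x ∉ omegaSet α ∧ (f C = C → β x = x)) := by
    intro C
    by_cases hC : C = 1
    · exact ⟨1, fun h => absurd hC h⟩
    obtain ⟨g, rfl⟩ := QuotientGroup.mk_surjective C
    have hgH : g ∉ H := fun h => hC (by rwa [QuotientGroup.eq_one_iff])
    by_cases hfix : f (QuotientGroup.mk g) = QuotientGroup.mk g
    · -- fixed coset: use the hypothesis
      have hmem : α g * g ∈ H := by
        rw [hf g, QuotientGroup.eq] at hfix
        simp only [hβ, inv_inv] at hfix
        exact hfix
      obtain ⟨h, hh, hω, h1⟩ := hyp g hgH hmem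
      refine ⟨h * g, fun _ => ⟨?_, hω, fun _ => ?_⟩⟩
      · rw [QuotientGroup.eq]
        simpa [mul_comm, mul_assoc] using inv_mem hh
      · simp only [hβ]
        rw [eq_inv_of_mul_eq_one_left h1, inv_inv]
    · -- non-fixed coset: g itself is not in omega
      refine ⟨g, fun _ => ⟨rfl, ?_, fun h => absurd h hfix⟩⟩
      intro hg
      apply hfix
      rw [hf g]
      simp only [hβ]
      rw [beta_omega_fix α hα g hg]
  choose p hpspec using hp
  letI : LinearOrder (G ⧸ H) := IsWellOrder.linearOrder WellOrderingRel
  set rep : G ⧸ H → G := fun C => if C ≤ f C then p C else β (p (f C)) with hrepdef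
  have hrep_mk : ∀ C : G ⧸ H, C ≠ 1 → QuotientGroup.mk (rep C) = C := by
    intro C hC
    simp only [hrepdef]
    by_cases hle : C ≤ f C
    · rw [if_pos hle]; exact ((hpspec C) hC).1
    · rw [if_neg hle]
      have hfC : f C ≠ 1 := hf1 C hC
      have h1 : QuotientGroup.mk (p (f C)) = f C := ((hpspec (f C)) hfC).1
      have h2 : f (QuotientGroup.mk (p (f C))) = f (f C) := congrArg f h1
      rw [hff, hf (p (f C))] at h2
      exact h2
  have hrep_ω : ∀ C : G ⧸ H, C ≠ 1 → rep C ∉ omegaSet α := by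
    intro C hC
    simp only [hrepdef]
    by_cases hle : C ≤ f C
    · rw [if_pos hle]; exact ((hpspec C) hC).2.1
    · rw [if_neg hle]
      intro hmem
      have h1 : β (β (p (f C))) ∈ omegaSet α := by
        have h2 : β (β (p (f C))) = β (p (f C)) := by
          simp only [hβ]
          exact beta_omega_fix α hα _ (by simpa only [hβ] using hmem)
        rw [h2]; exact hmem
      simp only [hβ, beta_beta α hα] at h1
      exact ((hpspec (f C)) (hf1 C hC)).2.1 h1
  have hrep_β : ∀ C : G ⧸ H, C ≠ 1 → rep (f C) = β (rep C) := by
    intro C hC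
    by_cases hfix : f C = C
    · have hpc : rep C = p C := by
        simp only [hrepdef]
        rw [if_pos (le_of_eq hfix.symm)]
      rw [hfix, hpc]
      exact (((hpspec C) hC).2.2 hfix).symm
    simp only [hrepdef]
    rw [hff]
    by_cases hle : C ≤ f C
    · have hlt : C < f C := lt_of_le_of_ne hle (Ne.symm hfix)
      rw [if_neg (not_le_of_gt hlt), if_pos hle]
    · have hlt : f C < C := lt_of_not_ge hle
      rw [if_pos (le_of_lt hlt), if_neg hle]
      simp only [hβ]
      rw [beta_beta α hα]
  -- the set S
  refine ⟨rep '' {C | C ≠ 1}, ⟨?_, ?_⟩, ?_, ?_⟩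
  · -- S ∩ omega = ∅
    ext x
    simp only [Set.mem_inter_iff, Set.mem_image, Set.mem_setOf_eq, Set.mem_empty_iff_false,
      iff_false, not_and]
    rintro ⟨C, hC, rfl⟩
    exact hrep_ω C hC
  · -- α '' S = S⁻¹
    ext x
    simp only [Set.mem_image, Set.mem_inv, Set.mem_setOf_eq]
    constructor
    · rintro ⟨s, ⟨C, hC, rfl⟩, rfl⟩
      refine ⟨f C, hf1 C hC, ?_⟩
      rw [hrep_β C hC]
    · rintro ⟨C, hC, hx⟩
      refine ⟨rep (f C), ⟨f C, hf1 C hC, rfl⟩, ?_⟩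
      rw [hrep_β C hC]
      simp only [hβ, map_inv, hα, inv_inv]
      rw [hx, inv_inv]
  · -- independence
    rintro x hx y hy ⟨C, hC, hCeq⟩
    apply hC
    rw [← hrep_mk C hC, hCeq, QuotientGroup.eq_one_iff]
    exact mul_mem (hH _ (inv_mem hx)) hy
  · -- every vertex outside H has a unique neighbor in H
    intro g hg
    set C : G ⧸ H := QuotientGroup.mk ((α g)⁻¹) with hCdef
    have hC : C ≠ 1 := by
      rw [hCdef, Ne, QuotientGroup.eq_one_iff]
      intro hmem
      exact hg ((hβH g).mpr hmem)
    refine ⟨α g * rep C, ⟨?_, ?_⟩, ?_⟩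
    · have h1 := hrep_mk C hC
      rw [hCdef, QuotientGroup.eq] at h1
      have h2 : ((rep C)⁻¹ * (α g)⁻¹)⁻¹ ∈ H := inv_mem h1
      rw [mul_inv, inv_inv, inv_inv, mul_comm] at h2
      exact h2
    · show GCAdj α (rep '' {C | C ≠ 1}) g (α g * rep C)
      unfold GCAdj
      rw [map_inv, inv_mul_cancel_left]
      exact ⟨C, hC, rfl⟩
    · rintro y ⟨hy, hadj⟩
      obtain ⟨C', hC', hC'eq⟩ := hadj
      have hmkC' : C' = C := by
        rw [← hrep_mk C' hC', hC'eq, hCdef, QuotientGroup.eq, map_inv]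
        simpa [mul_inv, inv_inv, mul_comm, mul_assoc, mul_left_comm] using inv_mem hy
      rw [hmkC'] at hC'eq
      rw [hC'eq, map_inv, mul_inv_cancel_left]

end Aux

theorem stmt16 {G : Type*} [CommGroup G] [Fintype G] (α : G ≃* G)
    (hα : ∀ g : G, α (α g) = g) (H : Subgroup G) :
    (∃ S : Set G, IsGenCayleySubset α S ∧ IsPerfectCode α S (H : Set G)) ↔
      ((⇑α) '' (H : Set G) = (H : Set G) ∧
        ∀ g : G, g ∉ H → α g * g ∈ H →
          ∃ h ∈ H, h * g ∉ omegaSet α ∧ α (h * g) * (h * g) = 1) := by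
  constructor
  · rintro ⟨S, ⟨hSω, hSα⟩, hind, hcode⟩
    -- S is disjoint from H
    have hSH : ∀ s ∈ S, s ∉ (H : Set G) := by
      intro s hs hsH
      apply hind 1 (one_mem H) s hsH
      show α (1⁻¹) * s ∈ S
      simpa using hs
    -- α maps H into H
    have hαH : ∀ h : G, h ∈ H → α h ∈ H := by
      intro h hh
      by_contra hc
      have hg : (α h)⁻¹ ∉ (H : Set G) := by
        intro hmem
        exact hc (by simpa using inv_mem hmem)
      obtain ⟨x, ⟨hxH, hxS⟩, -⟩ := hcode _ hg
      have hmem : h * x ∈ S := by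
        have h2 : α (((α h)⁻¹)⁻¹) * x ∈ S := hxS
        rwa [inv_inv, hα] at h2
      exact hSH _ hmem (mul_mem hh hxH)
    constructor
    · ext x
      simp only [Set.mem_image, SetLike.mem_coe]
      constructor
      · rintro ⟨y, hy, rfl⟩; exact hαH y hy
      · intro hx; exact ⟨α x, hαH x hx, hα x⟩
    · intro g hg haggH
      have hg' : g ∉ (H : Set G) := hg
      obtain ⟨x, ⟨hxH, hxS⟩, huniq⟩ := hcode g hg'
      set s : G := α (g⁻¹) * x with hsdef
      have hsS : s ∈ S := hxS
      have hxg : x * (α g * g)⁻¹ * g = s := by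
        rw [hsdef, map_inv, mul_inv]
        simp only [mul_comm, mul_assoc, mul_left_comm]
        rw [mul_left_comm, mul_inv_cancel_left]
      -- β s ∈ S, and it equals α(g⁻¹) * x'' for x'' ∈ H; uniqueness forces β s = s
      have hβsS : (α s)⁻¹ ∈ S := by
        have h3 : α s ∈ (⇑α) '' S := ⟨s, hsS, rfl⟩
        rw [hSα] at h3
        exact h3
      set x'' : G := (α x)⁻¹ * (α g * g) with hx''def
      have hx''H : x'' ∈ H := mul_mem (inv_mem (hαH x hxH)) haggH
      have hαs : α s = g⁻¹ * α x := by
        rw [hsdef, map_mul, map_inv, map_inv, hα]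
      have hx''eq : α (g⁻¹) * x'' = (α s)⁻¹ := by
        rw [hαs, hx''def, map_inv, mul_inv, inv_inv]
        simp [mul_comm, mul_assoc, mul_left_comm]
      have hxx : x'' = x := huniq x'' ⟨hx''H, show α (g⁻¹) * x'' ∈ S from hx''eq ▸ hβsS⟩
      have hfix : (α s)⁻¹ = s := by rw [← hx''eq, hxx, hsdef]
      have hfix2 : α s = s⁻¹ := inv_eq_iff_eq_inv.mp hfix
      refine ⟨x * (α g * g)⁻¹, mul_mem hxH (inv_mem haggH), ?_, ?_⟩
      · rw [hxg]
        intro hmem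
        have h4 : s ∈ S ∩ omegaSet α := ⟨hsS, hmem⟩
        rw [hSω] at h4
        exact h4
      · rw [hxg, hfix2, inv_mul_cancel]
  · rintro ⟨hαH, hyp⟩
    have hH : ∀ h : G, h ∈ H → α h ∈ H := by
      intro h hh
      have : α h ∈ (⇑α) '' (H : Set G) := ⟨h, hh, rfl⟩
      rwa [hαH] at this
    exact backward_dir α hα H hH hyp
end

section
/- Let G be a finite abelian group with the inversion automorphism ι(g) = g⁻¹, and H a subgroup of G of odd order. If H is a perfect code of some generalized Cayley graph of G induced by ι, then H = {g² : g ∈ G}. -/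
open Pointwise

variable {G : Type*}

theorem stmt17 {G : Type*} [CommGroup G] [Fintype G] (H : Subgroup G)
    (hodd : Odd (Nat.card H))
    (hpc : ∃ S : Set G, IsGenCayleySubset (MulEquiv.inv G) S ∧
      IsPerfectCode (MulEquiv.inv G) S (H : Set G)) :
    (H : Set G) = {x | ∃ g : G, g ^ 2 = x} := by
  obtain ⟨S, ⟨hdisj, -⟩, -, hcode⟩ := hpc
  have hsub : ∀ x ∈ (H : Set G), ∃ g : G, g ^ 2 = x := by
    intro x hx
    obtain ⟨k, hk⟩ := hodd
    refine ⟨((⟨x, hx⟩ : H) ^ (k + 1) : H), ?_⟩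
    have h1 : ((⟨x, hx⟩ : H) ^ (k + 1)) ^ 2 = (⟨x, hx⟩ : H) := by
      rw [← pow_mul]
      have : (k + 1) * 2 = Nat.card H + 1 := by omega
      rw [this, pow_succ, pow_card_eq_one', one_mul]
    calc (((⟨x, hx⟩ : H) ^ (k + 1) : H) : G) ^ 2
        = ((((⟨x, hx⟩ : H) ^ (k + 1)) ^ 2 : H) : G) := by norm_cast
      _ = x := by rw [h1]
  ext x
  simp only [Set.mem_setOf_eq]
  constructor
  · exact hsub x
  · rintro ⟨g, rfl⟩
    by_contra hxH
    obtain ⟨h, ⟨hhH, hadj⟩, -⟩ := hcode _ hxH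
    obtain ⟨m, hm⟩ := hsub h hhH
    have hS : (g * m) ^ 2 ∈ S := by
      have : MulEquiv.inv G (g ^ 2)⁻¹ * h ∈ S := hadj
      simpa [← hm, mul_pow, mul_comm] using this
    have hω : (g * m) ^ 2 ∈ omegaSet (MulEquiv.inv G) := ⟨g * m, by simp [sq]⟩
    exact Set.eq_empty_iff_forall_notMem.mp hdisj _ ⟨hS, hω⟩
end

section
/- Let G be a finite group, α an involutory automorphism, and H ≤ K ≤ G with α(K) = K. If H is a perfect code of some generalized Cayley graph GC(G, S, α) of G induced by α, then H is a perfect code of the generalized Cayley graph GC(K, S ∩ K, α|_K) of K, where S ∩ K is a generalized Cayley subset of K induced by the restriction of α. -/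
open Pointwise

variable {G : Type*}

theorem stmt18 [Group G] [Fintype G] (α : G ≃* G) (hα : ∀ g : G, α (α g) = g)
    (S : Set G) (hS : IsGenCayleySubset α S)
    (H K : Subgroup G) (hHK : H ≤ K) (hK : (⇑α) '' (K : Set G) = (K : Set G))
    (hpc : IsPerfectCode α S (H : Set G)) :
    ((S ∩ (K : Set G)) ∩ {x | ∃ k ∈ (K : Set G), α (k⁻¹) * k = x} = ∅ ∧
      (⇑α) '' (S ∩ (K : Set G)) = (S ∩ (K : Set G))⁻¹) ∧
    (∀ x ∈ (H : Set G), ∀ y ∈ (H : Set G), ¬ GCAdj α (S ∩ (K : Set G)) x y) ∧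
    (∀ g ∈ (K : Set G), g ∉ (H : Set G) →
      ∃! x, x ∈ (H : Set G) ∧ GCAdj α (S ∩ (K : Set G)) g x) := by

  have hKmem : ∀ x : G, α x ∈ K ↔ x ∈ K := by
    intro x
    constructor
    · intro hx
      have : α x ∈ (⇑α) '' (K : Set G) := by rw [hK]; exact hx
      obtain ⟨y, hy, hxy⟩ := this
      have : y = x := α.injective hxy
      rwa [← this]
    · intro hx
      have : α x ∈ (⇑α) '' (K : Set G) := ⟨x, hx, rfl⟩
      rwa [hK] at this
  refine ⟨⟨?_, ?_⟩, ?_, ?_⟩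
  · ext x
    simp only [Set.mem_inter_iff, Set.mem_empty_iff_false, iff_false]
    rintro ⟨⟨hxS, hxK⟩, k, hk, hkx⟩
    have : x ∈ S ∩ omegaSet α := ⟨hxS, k, hkx⟩
    rw [hS.1] at this
    exact this
  · ext x
    constructor
    · rintro ⟨y, ⟨hyS, hyK⟩, rfl⟩
      constructor
      · have : α y ∈ (⇑α) '' S := ⟨y, hyS, rfl⟩
        rw [hS.2] at this
        exact this
      · show (α y)⁻¹ ∈ (K : Set G)
        exact inv_mem ((hKmem y).2 hyK)
    · intro hx
      have hx1 : x ∈ (S⁻¹ : Set G) := hx.1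
      rw [← hS.2] at hx1
      obtain ⟨y, hyS, rfl⟩ := hx1
      refine ⟨y, ⟨hyS, ?_⟩, rfl⟩
      have : (α y)⁻¹ ∈ K := hx.2
      have := inv_mem this
      simp only [inv_inv] at this
      exact (hKmem y).1 this
  · intro x hx y hy hadj
    exact hpc.1 x hx y hy hadj.1
  · intro g hgK hgH
    obtain ⟨x, ⟨hxH, hxadj⟩, huniq⟩ := hpc.2 g hgH
    refine ⟨x, ⟨hxH, hxadj, ?_⟩, fun y hy => huniq y ⟨hy.1, hy.2.1⟩⟩
    show α g⁻¹ * x ∈ K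
    exact mul_mem ((hKmem g⁻¹).2 (inv_mem hgK)) (hHK hxH)
end

section
/- Let G be a finite group, α an involutory automorphism, S = {s₁,…,s_r} a generalized Cayley subset induced by α, and X ⊆ G. Then X is a total perfect code of GC(G, S, α) if and only if {α(X)s₁, …, α(X)s_r} is a partition of G; equivalently, |G| = |X|·r and (α(X⁻¹)α(X)) ∩ (SS⁻¹) = {e}. -/
open Pointwise

variable {G : Type*}

lemma gc_adj_symm [Group G] (α : G ≃* G) (hα : ∀ g : G, α (α g) = g) {S : Set G}
    (hS : (⇑α) '' S = S⁻¹) {g h : G} (hgh : GCAdj α S g h) : GCAdj α S h g := by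
  have h1 : α (α g⁻¹ * h) ∈ S⁻¹ := by rw [← hS]; exact Set.mem_image_of_mem _ hgh
  have h2 : α (α g⁻¹ * h) = g⁻¹ * α h := by rw [map_mul, hα]
  rw [h2, Set.mem_inv] at h1
  have h3 : (g⁻¹ * α h)⁻¹ = α h⁻¹ * g := by rw [map_inv]; group
  unfold GCAdj
  rw [← h3]
  exact h1

theorem stmt19 [Group G] [Fintype G] (α : G ≃* G) (hα : ∀ g : G, α (α g) = g)
    (S : Set G) (hS : IsGenCayleySubset α S) (r : ℕ) (hr : Nat.card S = r)
    (X : Set G) :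
    (IsTotalPerfectCode α S X ↔
      ((⋃ s ∈ S, ((⇑α) '' X) * {s}) = Set.univ ∧
        ∀ s ∈ S, ∀ t ∈ S, s ≠ t →
          Disjoint (((⇑α) '' X) * {s}) (((⇑α) '' X) * {t}))) ∧
    (IsTotalPerfectCode α S X ↔
      (Nat.card G = Nat.card X * r ∧
        ((⇑α) '' X⁻¹) * ((⇑α) '' X) ∩ (S * S⁻¹) = {1})) := by
  have hS2 : (⇑α) '' S = S⁻¹ := hS.2
  -- key reformulation: every g is uniquely of the form α x * s with x ∈ X, s ∈ S
  have key : IsTotalPerfectCode α S X ↔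
      ∀ g : G, ∃! p : G × G, p.1 ∈ X ∧ p.2 ∈ S ∧ α p.1 * p.2 = g := by
    constructor
    · intro h g
      obtain ⟨x, ⟨hxX, hxadj⟩, huniq⟩ := h g
      have hxg : GCAdj α S x g := gc_adj_symm α hα hS2 hxadj
      refine ⟨(x, α x⁻¹ * g), ⟨hxX, hxg, ?_⟩, ?_⟩
      · rw [map_inv]; group
      · rintro ⟨x', s'⟩ ⟨hx', hs', heq⟩
        have hs'eq : α x'⁻¹ * g = s' := by rw [← heq, map_inv]; group
        have hadj' : GCAdj α S x' g := by unfold GCAdj; rw [hs'eq]; exact hs'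
        have hx'x : x' = x := huniq x' ⟨hx', gc_adj_symm α hα hS2 hadj'⟩
        subst hx'x
        simp [← hs'eq]
    · intro h g
      obtain ⟨⟨x, s⟩, ⟨hxX, hsS, heq⟩, huniq⟩ := h g
      have hseq : α x⁻¹ * g = s := by rw [← heq, map_inv]; group
      have hadjxg : GCAdj α S x g := by unfold GCAdj; rw [hseq]; exact hsS
      refine ⟨x, ⟨hxX, gc_adj_symm α hα hS2 hadjxg⟩, ?_⟩
      rintro y ⟨hyX, hyadj⟩
      have hygadj : GCAdj α S y g := gc_adj_symm α hα hS2 hyadj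
      have := huniq (y, α y⁻¹ * g) ⟨hyX, hygadj, by rw [map_inv]; group⟩
      exact congrArg Prod.fst this
  have hmem : ∀ s g : G, g ∈ ((⇑α) '' X) * ({s} : Set G) ↔ ∃ x ∈ X, α x * s = g := by
    intro s g
    constructor
    · rintro hg
      obtain ⟨a, ha, b, hb, hab⟩ := Set.mem_mul.1 hg
      obtain ⟨x, hx, rfl⟩ := ha
      rw [Set.mem_singleton_iff] at hb
      exact ⟨x, hx, by rw [← hb]; exact hab⟩
    · rintro ⟨x, hx, rfl⟩
      exact Set.mul_mem_mul (Set.mem_image_of_mem _ hx) rfl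
  constructor
  · rw [key]
    constructor
    · intro h
      constructor
      · rw [Set.eq_univ_iff_forall]
        intro g
        obtain ⟨⟨x, s⟩, ⟨hxX, hsS, heq⟩, _⟩ := h g
        exact Set.mem_biUnion hsS ((hmem s g).2 ⟨x, hxX, heq⟩)
      · intro s hs t ht hst
        rw [Set.disjoint_left]
        intro g hg1 hg2
        obtain ⟨x, hx, hxe⟩ := (hmem s g).1 hg1
        obtain ⟨x', hx', hx'e⟩ := (hmem t g).1 hg2
        obtain ⟨p, _, hu⟩ := h g
        have e1 := hu (x, s) ⟨hx, hs, hxe⟩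
        have e2 := hu (x', t) ⟨hx', ht, hx'e⟩
        exact hst (congrArg Prod.snd (e1.trans e2.symm))
    · rintro ⟨hcov, hdisj⟩ g
      have hg : g ∈ ⋃ s ∈ S, ((⇑α) '' X) * ({s} : Set G) := hcov ▸ Set.mem_univ g
      obtain ⟨s, hs, hgs⟩ := Set.mem_iUnion₂.1 hg
      obtain ⟨x, hx, hxe⟩ := (hmem s g).1 hgs
      refine ⟨(x, s), ⟨hx, hs, hxe⟩, ?_⟩
      rintro ⟨x', s'⟩ ⟨hx', hs', hx'e⟩
      have hss' : s' = s := by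
        by_contra hne
        exact Set.disjoint_left.1 (hdisj s' hs' s hs hne)
          ((hmem s' g).2 ⟨x', hx', hx'e⟩) ((hmem s g).2 ⟨x, hx, hxe⟩)
      subst hss'
      have : α x' = α x := by
        have := hx'e.trans hxe.symm
        exact mul_right_cancel this
      have hxx : x' = x := α.injective this
      simp [hxx]
  · rw [key]
    set f : ↥X × ↥S → G := fun p => α p.1.1 * p.2.1 with hf
    have hbij : (∀ g : G, ∃! p : G × G, p.1 ∈ X ∧ p.2 ∈ S ∧ α p.1 * p.2 = g)
        ↔ Function.Bijective f := by
      constructor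
      · intro h
        constructor
        · rintro ⟨⟨x, hx⟩, ⟨s, hs⟩⟩ ⟨⟨x', hx'⟩, ⟨s', hs'⟩⟩ heq
          obtain ⟨p, _, hu⟩ := h (α x * s)
          have e1 := hu (x, s) ⟨hx, hs, rfl⟩
          have e2 := hu (x', s') ⟨hx', hs', heq.symm⟩
          have := e1.trans e2.symm
          rw [Prod.ext_iff] at this
          simp only [Prod.mk.injEq]
          exact ⟨Subtype.ext this.1, Subtype.ext this.2⟩
        · intro g
          obtain ⟨⟨x, s⟩, ⟨hx, hs, heq⟩, _⟩ := h g
          exact ⟨⟨⟨x, hx⟩, ⟨s, hs⟩⟩, heq⟩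
      · rintro ⟨hinj, hsurj⟩ g
        obtain ⟨⟨⟨x, hx⟩, ⟨s, hs⟩⟩, heq⟩ := hsurj g
        refine ⟨(x, s), ⟨hx, hs, heq⟩, ?_⟩
        rintro ⟨x', s'⟩ ⟨hx', hs', heq'⟩
        have := hinj (a₁ := (⟨x', hx'⟩, ⟨s', hs'⟩)) (a₂ := (⟨x, hx⟩, ⟨s, hs⟩))
          (by show α x' * s' = α x * s; rw [heq']; exact heq.symm)
        rw [Prod.ext_iff, Subtype.ext_iff, Subtype.ext_iff] at this
        exact Prod.ext this.1 this.2
    rw [hbij]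
    constructor
    · intro hb
      have hcard : Nat.card G = Nat.card X * r := by
        rw [← hr, ← Nat.card_prod, Nat.card_eq_of_bijective f hb]
      refine ⟨hcard, ?_⟩
      apply Set.eq_singleton_iff_unique_mem.2
      constructor
      · obtain ⟨⟨⟨x, hx⟩, ⟨s, hs⟩⟩, _⟩ := hb.2 1
        constructor
        · have : (1 : G) = α x⁻¹ * α x := by rw [map_inv]; group
          rw [this]
          exact Set.mul_mem_mul (Set.mem_image_of_mem _ (Set.inv_mem_inv.2 hx))
            (Set.mem_image_of_mem _ hx)
        · have : (1 : G) = s * s⁻¹ := by group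
          rw [this]
          exact Set.mul_mem_mul hs (Set.inv_mem_inv.2 hs)
      · rintro u ⟨hu1, hu2⟩
        obtain ⟨a, ha, b, hb', hab⟩ := Set.mem_mul.1 hu1
        obtain ⟨c, hc, rfl⟩ := ha
        obtain ⟨x, hx, rfl⟩ := hb'
        obtain ⟨s, hs, d, hd, hsd⟩ := Set.mem_mul.1 hu2
        rw [Set.mem_inv] at hc hd
        have heq : α x * d⁻¹ = α c⁻¹ * s := by
          rw [map_inv]
          have : α c * α x = s * d := hab.trans hsd.symm
          have h1 : α x = (α c)⁻¹ * (s * d) := by rw [← this]; group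
          rw [h1]; group
        have := hb.1 (a₁ := (⟨x, hx⟩, ⟨d⁻¹, hd⟩)) (a₂ := (⟨c⁻¹, hc⟩, ⟨s, hs⟩))
          (by show α x * d⁻¹ = α c⁻¹ * s; exact heq)
        rw [Prod.ext_iff, Subtype.ext_iff, Subtype.ext_iff] at this
        obtain ⟨h1, h2⟩ := this
        have hx1 : x = c⁻¹ := h1
        show u = 1
        rw [← hab, hx1, map_inv]
        group
    · rintro ⟨hcard, hint⟩
      have hinj : Function.Injective f := by
        rintro ⟨⟨x, hx⟩, ⟨s, hs⟩⟩ ⟨⟨x', hx'⟩, ⟨s', hs'⟩⟩ heq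
        have heq' : α x * s = α x' * s' := heq
        have hmem1 : α x⁻¹ * α x' ∈ ((⇑α) '' X⁻¹) * ((⇑α) '' X) :=
          Set.mul_mem_mul (Set.mem_image_of_mem _ (Set.inv_mem_inv.2 hx))
            (Set.mem_image_of_mem _ hx')
        have hval : α x⁻¹ * α x' = s * s'⁻¹ := by
          rw [map_inv]
          have h1 : α x' = (α x) * s * s'⁻¹ := by rw [heq']; group
          rw [h1]; group
        have hmem2 : α x⁻¹ * α x' ∈ S * S⁻¹ := by
          rw [hval]
          exact Set.mul_mem_mul hs (Set.inv_mem_inv.2 hs')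
        have h1 : α x⁻¹ * α x' = 1 := by
          have := hint ▸ (Set.mem_inter hmem1 hmem2)
          exact this
        have hxx : x = x' := by
          apply α.injective
          rw [map_inv] at h1
          exact (inv_mul_eq_one.1 h1)
        have hss : s = s' := by
          rw [hxx] at heq'
          exact mul_left_cancel heq'
        simp [hxx, hss]
      rw [Nat.bijective_iff_injective_and_card]
      refine ⟨hinj, ?_⟩
      rw [Nat.card_prod, hr, ← hcard]
end
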